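/- arXiv:math/0102073 — 3 statements merged into one kernel-verified Lean document; each statement's English description precedes it below -/
import Mathlib

section
/- For integers L ≥ 2t ≥ 0, the polynomial q^(t^2) * qbinom(L-t, t) in q is the generating function for partitions into exactly t parts with difference at least 2 between consecutive parts, each part being less than L. -/
/-!
Subtracting the staircase `1, 3, …, 2t - 1` from a partition into `t` parts with gaps at least `2`
and parts in `[1, L - 1]` leaves a partition into `t` parts in `[0, L - 2t]`, i.e. a monotone tuple
`Fin t → Fin (L - 2t + 1)`, and the staircase has weight `t²`. The generating function of such
monotone tuples obeys the `q`-Pascal recursion (split on whether the largest entry is maximal),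
as does `qbinom(m + t, t)`, so the two agree.
-/

open Finset

/-- The formal variable `q` in the field of rational functions over `ℚ`. -/
noncomputable def q : RatFunc ℚ := RatFunc.X

/-- Gaussian binomial coefficient `qbinom(N, K)` in the variable `p`:
`(p^{K+1}; p)_{N-K} / (p; p)_{N-K}` when `0 ≤ K ≤ N`, and `0` otherwise. -/
noncomputable def qbin (p : RatFunc ℚ) (N K : ℤ) : RatFunc ℚ :=
  if 0 ≤ K ∧ K ≤ N then
    (∏ j ∈ Finset.range (N - K).toNat, (1 - p ^ (K + 1 + (j : ℤ)))) /
    (∏ j ∈ Finset.range (N - K).toNat, (1 - p ^ ((j : ℤ) + 1)))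
  else 0

theorem Fin.monotone_snoc_top {α : Type*} [Preorder α] [OrderTop α] {n : ℕ} {g : Fin n → α}
    (hg : Monotone g) : Monotone (Fin.snoc g ⊤ : Fin (n + 1) → α) := by
  intro a b hab
  induction b using Fin.lastCases with
  | last => simp
  | cast b =>
    induction a using Fin.lastCases with
    | last => exact absurd hab (Fin.castSucc_lt_last b).not_ge
    | cast a => simpa using hg (Fin.castSucc_le_castSucc_iff.1 hab)

section BoxGF

variable {R : Type*} [CommSemiring R] (x : R)

noncomputable def boxGF (t m : ℕ) : R :=
  ∑ g ∈ univ.filter (Monotone : (Fin t → Fin (m + 1)) → Prop), x ^ ∑ i, (g i : ℕ)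

theorem boxGF_zero_left (m : ℕ) : boxGF x 0 m = 1 := by
  simp [boxGF, Subsingleton.monotone]

theorem boxGF_zero_right (t : ℕ) : boxGF x t 0 = 1 := by
  simp [boxGF, Subsingleton.monotone']

theorem sum_monotone_last_ne_last (t m : ℕ) :
    ∑ g ∈ univ.filter (fun g : Fin (t + 1) → Fin (m + 2) =>
        Monotone g ∧ g (Fin.last t) ≠ Fin.last (m + 1)), x ^ ∑ i, (g i : ℕ) =
      boxGF x (t + 1) m := by
  symm
  refine sum_bij (fun g _ => Fin.castSucc ∘ g) ?_ ?_ ?_ (fun g _ => by simp)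
  · intro g hg
    simp only [mem_filter, mem_univ, true_and] at hg ⊢
    exact ⟨Fin.strictMono_castSucc.monotone.comp hg, Fin.castSucc_ne_last _⟩
  · exact fun g _ g' _ h => Fin.castSucc_injective _ |>.comp_left h
  · intro g hg
    simp only [mem_filter, mem_univ, true_and] at hg
    obtain ⟨hmono, hlast⟩ := hg
    have hne : ∀ i, g i ≠ Fin.last (m + 1) := fun i =>
      (lt_of_le_of_lt (hmono (Fin.le_last i)) (Fin.lt_last_iff_ne_last.2 hlast)).ne
    exact ⟨_, by simpa using Fin.monotone_castPred_comp hne hmono, by ext; simp⟩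

theorem sum_monotone_last_eq_last (t m : ℕ) :
    ∑ g ∈ univ.filter (fun g : Fin (t + 1) → Fin (m + 2) =>
        Monotone g ∧ g (Fin.last t) = Fin.last (m + 1)), x ^ ∑ i, (g i : ℕ) =
      x ^ (m + 1) * boxGF x t (m + 1) := by
  rw [boxGF, mul_sum]
  refine sum_nbij' Fin.init (Fin.snoc · ⊤) ?_ ?_ ?_ ?_ ?_
  · intro g hg
    simp only [mem_filter, mem_univ, true_and] at hg ⊢
    exact hg.1.comp Fin.strictMono_castSucc.monotone
  · intro g hg
    simp only [mem_filter, mem_univ, true_and] at hg ⊢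
    exact ⟨Fin.monotone_snoc_top hg, by simp [Fin.top_eq_last]⟩
  · intro g hg
    simp only [mem_filter, mem_univ, true_and] at hg
    rw [Fin.top_eq_last, ← hg.2]
    exact Fin.snoc_init_self g
  · exact fun g _ => Fin.init_snoc _ _
  · intro g hg
    simp only [mem_filter, mem_univ, true_and] at hg
    rw [Fin.sum_univ_castSucc, hg.2, pow_add, mul_comm]
    rfl

theorem boxGF_succ_succ (t m : ℕ) :
    boxGF x (t + 1) (m + 1) = boxGF x (t + 1) m + x ^ (m + 1) * boxGF x t (m + 1) := by
  rw [boxGF, ← sum_filter_add_sum_filter_not _ (fun g => g (Fin.last t) ≠ Fin.last (m + 1))]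
  simp only [filter_filter, not_not]
  rw [sum_monotone_last_ne_last, sum_monotone_last_eq_last]

end BoxGF

theorem Fin.monotone_of_le_of_val_add_one_eq {α : Type*} [Preorder α] {n : ℕ} {f : Fin n → α}
    (h : ∀ i j : Fin n, (i : ℕ) + 1 = j → f i ≤ f j) : Monotone f := by
  cases n with
  | zero => exact fun i => i.elim0
  | succ n => exact Fin.monotone_iff_le_succ.2 fun i => h _ _ (by simp)

theorem Fin.sum_two_mul_add_one (t : ℕ) : ∑ i : Fin t, (2 * (i : ℕ) + 1) = t ^ 2 := by
  induction t with
  | zero => simp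
  | succ t ih => rw [Fin.sum_univ_castSucc]; simp only [Fin.val_castSucc, Fin.val_last, ih]; ring

def gapTwoTuples (t L : ℕ) : Finset (Fin t → Fin L) :=
  univ.filter fun f => (∀ i, 1 ≤ (f i : ℕ)) ∧
    ∀ i j : Fin t, (i : ℕ) + 1 = j → (f i : ℕ) + 2 ≤ (f j : ℕ)

theorem monotone_sub_two_mul_of_mem_gapTwoTuples {t L : ℕ} {f : Fin t → Fin L}
    (hf : f ∈ gapTwoTuples t L) : Monotone fun i : Fin t => (f i : ℕ) - 2 * i :=
  Fin.monotone_of_le_of_val_add_one_eq fun i j hij => by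
    have := (mem_filter.1 hf).2.2 i j hij
    omega

theorem apply_mem_Icc_of_mem_gapTwoTuples {t L : ℕ} {f : Fin t → Fin L}
    (hf : f ∈ gapTwoTuples t L) (i : Fin t) :
    (f i : ℕ) ∈ Set.Icc (2 * (i : ℕ) + 1) (L - 2 * t + 2 * i + 1) := by
  have hmono := monotone_sub_two_mul_of_mem_gapTwoTuples hf
  have ht := i.pos
  have hfirst := hmono (show (⟨0, ht⟩ : Fin t) ≤ i from Nat.zero_le _)
  have hlast := hmono (show i ≤ ⟨t - 1, by omega⟩ from Nat.le_sub_one_of_lt i.isLt)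
  have hpos := (mem_filter.1 hf).2.1 ⟨0, ht⟩
  have := (f ⟨t - 1, by omega⟩).isLt
  simp only at hfirst hlast hpos
  exact ⟨by omega, by omega⟩

theorem sum_gapTwoTuples {R : Type*} [CommSemiring R] (x : R) {t L : ℕ} (h : 2 * t ≤ L) :
    ∑ f ∈ gapTwoTuples t L, x ^ ∑ i, (f i : ℕ) = x ^ (t ^ 2) * boxGF x t (L - 2 * t) := by
  rw [boxGF, mul_sum]
  symm
  refine sum_bij (fun g _ i => ⟨g i + 2 * i + 1, by have := (g i).isLt; have := i.isLt; omega⟩)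
    ?_ ?_ ?_ ?_
  · intro g hg
    simp only [gapTwoTuples, mem_filter, mem_univ, true_and] at hg ⊢
    exact ⟨fun i => by omega, fun i j hij => by have := hg (show i ≤ j by omega); omega⟩
  · intro g _ g' _ hgg'
    funext i
    have := congrArg (fun f => (f i : ℕ)) hgg'
    simp only at this
    exact Fin.ext (by omega)
  · intro f hf
    have hmono := monotone_sub_two_mul_of_mem_gapTwoTuples hf
    have hbounds := apply_mem_Icc_of_mem_gapTwoTuples hf
    refine ⟨fun i => ⟨f i - 2 * i - 1, by have := (hbounds i).2; omega⟩, ?_, ?_⟩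
    · simp only [mem_filter, mem_univ, true_and]
      intro i j hij
      have := hmono hij
      simp only [Fin.le_def] at this ⊢
      omega
    · funext i
      exact Fin.ext (by have := (hbounds i).1; simp only; omega)
  · intro g _
    rw [← pow_add]
    congr 1
    rw [← Fin.sum_two_mul_add_one, ← sum_add_distrib]
    exact sum_congr rfl fun i _ => by ring

theorem qbin_natCast_add (p : RatFunc ℚ) (m t : ℕ) :
    qbin p (m + t) t =
      (∏ j ∈ range m, (1 - p ^ (t + 1 + j))) / ∏ j ∈ range m, (1 - p ^ (j + 1)) := by
  rw [qbin, if_pos ⟨by positivity, by omega⟩, show ((m : ℤ) + t - t).toNat = m by omega]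
  norm_cast

theorem q_pow_succ_ne_one (n : ℕ) : q ^ (n + 1) ≠ 1 := by
  intro h
  have : (Polynomial.X ^ (n + 1) : Polynomial ℚ) = 1 :=
    RatFunc.algebraMap_injective ℚ (by simpa [q, ← RatFunc.algebraMap_X] using h)
  simpa using congrArg Polynomial.natDegree this

section Pascal

variable {p : RatFunc ℚ} (hp : ∀ n : ℕ, p ^ (n + 1) ≠ 1)
include hp

theorem prod_range_one_sub_pow_succ_ne_zero (m : ℕ) : ∏ j ∈ range m, (1 - p ^ (j + 1)) ≠ 0 :=
  prod_ne_zero_iff.2 fun j _ => sub_ne_zero.2 (hp j).symm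

theorem qbin_natCast_add_zero (m : ℕ) : qbin p (m + (0 : ℕ)) (0 : ℕ) = 1 := by
  rw [qbin_natCast_add]
  simp only [zero_add, add_comm 1]
  exact div_self (prod_range_one_sub_pow_succ_ne_zero hp m)

theorem qbin_succ_add_succ (m t : ℕ) :
    qbin p ((m + 1 : ℕ) + (t + 1 : ℕ)) (t + 1 : ℕ) =
      qbin p (m + (t + 1 : ℕ)) (t + 1 : ℕ) + p ^ (m + 1) * qbin p ((m + 1 : ℕ) + t) t := by
  have hden := prod_range_one_sub_pow_succ_ne_zero hp m
  have hlast : 1 - p ^ (m + 1) ≠ 0 := sub_ne_zero.2 (hp m).symm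
  rw [qbin_natCast_add, qbin_natCast_add, qbin_natCast_add, prod_range_succ,
    prod_range_succ (fun j => 1 - p ^ (j + 1)), prod_range_succ']
  rw [prod_congr rfl fun j _ => show 1 - p ^ (t + 1 + (j + 1)) = 1 - p ^ (t + 1 + 1 + j) by
    ring_nf]
  field_simp
  ring

theorem qbin_natCast_add_eq_boxGF : ∀ m t : ℕ, qbin p (m + t) t = boxGF p t m
  | m, 0 => by rw [qbin_natCast_add_zero hp, boxGF_zero_left]
  | 0, t + 1 => by rw [qbin_natCast_add, boxGF_zero_right]; simp
  | m + 1, t + 1 => by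
    rw [qbin_succ_add_succ hp, qbin_natCast_add_eq_boxGF m (t + 1),
      qbin_natCast_add_eq_boxGF (m + 1) t, boxGF_succ_succ]

end Pascal

/-- For `L ≥ 2t ≥ 0`, `q^(t²) · qbinom(L-t, t)` is the generating function for
partitions into exactly `t` parts with difference at least 2 between consecutive
parts, each part positive and less than `L`.  Partitions are encoded as
increasing tuples `f : Fin t → Fin L` of parts. -/
theorem stmt0 (L t : ℕ) (h : 2 * t ≤ L) :
    q ^ (t ^ 2) * qbin q ((L : ℤ) - t) t =
    ∑ f ∈ Finset.univ.filter (fun f : Fin t → Fin L =>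
        (∀ i, 1 ≤ (f i : ℕ)) ∧
        (∀ i j : Fin t, (i : ℕ) + 1 = (j : ℕ) → (f i : ℕ) + 2 ≤ (f j : ℕ))),
      q ^ (∑ i, (f i : ℕ)) := by
  have hL : (L : ℤ) - t = ((L - 2 * t : ℕ) : ℤ) + t := by omega
  rw [hL, qbin_natCast_add_eq_boxGF q_pow_succ_ne_one, ← sum_gapTwoTuples q h]
  rfl
end

section
/- The polynomial sequences e_L(q) and d_L(q) defined by the recurrence c_L = c_{L-1} + q^{L-1} c_{L-2} for L ≥ 2 with initial conditions d_0 = 0, e_0 = e_1 = d_1 = 1, satisfy: sum over t ≥ 0 of q^(t^2) qbinom(L-t, t) = e_L(q), for all L ≥ 0. -/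
open Finset

lemma q_ne : q ≠ 0 := RatFunc.X_ne_zero

lemma one_sub_q_pow_ne (n : ℕ) (hn : 1 ≤ n) : (1 : RatFunc ℚ) - q ^ n ≠ 0 := by
  intro h
  have h1 : q ^ n = 1 := by linear_combination -h
  have h2 : algebraMap (Polynomial ℚ) (RatFunc ℚ) (Polynomial.X ^ n) = algebraMap _ _ 1 := by
    simpa [map_pow, RatFunc.algebraMap_X, q] using h1
  have h3 := RatFunc.algebraMap_injective ℚ h2
  have := congrArg Polynomial.natDegree h3
  simp [Polynomial.natDegree_X_pow] at this
  omega

noncomputable def D (m : ℕ) : RatFunc ℚ := ∏ j ∈ Finset.range m, (1 - q ^ (j + 1))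

lemma D_ne (m : ℕ) : D m ≠ 0 :=
  Finset.prod_ne_zero_iff.mpr fun j _ => one_sub_q_pow_ne (j + 1) (by omega)

lemma D_zero : D 0 = 1 := by simp [D]

lemma D_succ (m : ℕ) : D (m + 1) = D m * (1 - q ^ (m + 1)) := Finset.prod_range_succ _ _

lemma qbin_nat (N K : ℕ) (h : K ≤ N) : qbin q N K = D N / (D K * D (N - K)) := by
  unfold qbin
  rw [if_pos ⟨by positivity, by exact_mod_cast h⟩]
  have ht : ((N : ℤ) - K).toNat = N - K := by omega
  rw [ht]
  have hnum : ∀ j ∈ Finset.range (N - K), (1 : RatFunc ℚ) - q ^ ((K : ℤ) + 1 + (j : ℤ))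
      = 1 - q ^ (K + j + 1) := by
    intro j _
    rw [← zpow_natCast q (K + j + 1)]
    congr 2 <;> (push_cast; omega)
  have hden : ∀ j ∈ Finset.range (N - K), (1 : RatFunc ℚ) - q ^ ((j : ℤ) + 1)
      = 1 - q ^ (j + 1) := by
    intro j _
    rw [← zpow_natCast q (j + 1)]
    congr 2 <;> (push_cast; omega)
  rw [Finset.prod_congr rfl hnum, Finset.prod_congr rfl hden]
  have hDN : D N = D K * ∏ j ∈ Finset.range (N - K), (1 - q ^ (K + j + 1)) := by
    have h2 := Finset.prod_range_add (fun j => (1 : RatFunc ℚ) - q ^ (j + 1)) K (N - K)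
    rw [show K + (N - K) = N by omega] at h2
    unfold D
    simpa using h2
  rw [show (∏ j ∈ Finset.range (N - K), ((1:RatFunc ℚ) - q ^ (j + 1))) = D (N - K) from rfl]
  rw [hDN, mul_div_mul_left _ _ (D_ne K)]

lemma qbin_self (N : ℕ) : qbin q N N = 1 := by
  rw [qbin_nat N N le_rfl]
  simp [D_zero, div_self (D_ne N)]

lemma qbin_zero (N : ℕ) : qbin q N 0 = 1 := by
  have h := qbin_nat N 0 (Nat.zero_le N)
  simpa [D_zero, div_self (D_ne N)] using h

lemma qbin_neg (N K : ℤ) (h : K < 0) : qbin q N K = 0 := by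
  unfold qbin; rw [if_neg]; omega

lemma qbin_gt (N K : ℤ) (h : N < K) : qbin q N K = 0 := by
  unfold qbin; rw [if_neg]; omega

lemma pascal_int (N K : ℕ) (h1 : K + 1 ≤ N) :
    qbin q (N + 1) (K + 1) = qbin q N (K + 1) + q ^ (N - K) * qbin q N K := by
  rw [show ((N:ℤ) + 1) = ((N + 1 : ℕ) : ℤ) by push_cast; ring,
    show ((K:ℤ) + 1) = ((K + 1 : ℕ) : ℤ) by push_cast; ring,
    qbin_nat (N + 1) (K + 1) (by omega), qbin_nat N (K + 1) (by omega),
    qbin_nat N K (by omega)]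
  have e3 : N + 1 - (K + 1) = N - K := by omega
  have e5 : N - (K + 1) = N - K - 1 := by omega
  have e4 : D (N - K) = D (N - K - 1) * (1 - q ^ (N - K)) := by
    have h := D_succ (N - K - 1)
    rw [show N - K - 1 + 1 = N - K by omega] at h
    exact h
  rw [e3, e5, D_succ N, D_succ K, e4]
  have key : q ^ (N + 1) = q ^ (N - K) * q ^ (K + 1) := by
    rw [← pow_add]; congr 1; omega
  rw [key]
  have n1 := D_ne K
  have n2 := D_ne (N - K - 1)
  have n3 := one_sub_q_pow_ne (K + 1) (by omega)
  have n4 := one_sub_q_pow_ne (N - K) (by omega)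
  field_simp
  ring

lemma pascal (N K : ℤ) (hN : 1 ≤ N) :
    qbin q N K = qbin q (N - 1) K + q ^ (N - K) * qbin q (N - 1) (K - 1) := by
  rcases lt_or_ge K 0 with hK | hK
  · rw [qbin_neg _ _ hK, qbin_neg _ _ hK, qbin_neg _ _ (by omega), mul_zero, add_zero]
  rcases lt_or_ge N K with hNK | hNK
  · rw [qbin_gt _ _ hNK, qbin_gt _ _ (by omega), qbin_gt _ _ (by omega), mul_zero, add_zero]
  lift N to ℕ using (by omega)
  lift K to ℕ using hK
  have hn : 1 ≤ N := by exact_mod_cast hN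
  have hkn : K ≤ N := by exact_mod_cast hNK
  have hc1 : ((N : ℤ) - 1) = ((N - 1 : ℕ) : ℤ) := by omega
  rcases Nat.eq_zero_or_pos K with rfl | hk
  · simp only [Nat.cast_zero, zero_sub, sub_zero, hc1]
    rw [qbin_zero N, qbin_zero (N - 1), qbin_neg _ _ (by omega), mul_zero, add_zero]
  by_cases hKN : K = N
  · subst hKN
    rw [qbin_self K, hc1, qbin_gt _ _ (by omega), qbin_self (K - 1)]
    simp
  · have hint : K - 1 + 1 ≤ N - 1 := by omega
    have h := pascal_int (N - 1) (K - 1) hint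
    rw [show ((N - 1 : ℕ) : ℤ) + 1 = (N : ℤ) by omega,
      show ((K - 1 : ℕ) : ℤ) + 1 = (K : ℤ) by omega] at h
    rw [hc1, show ((K : ℤ) - 1) = ((K - 1 : ℕ) : ℤ) by omega,
      show ((N : ℤ) - (K : ℤ)) = ((N - 1 - (K - 1) : ℕ) : ℤ) by omega, zpow_natCast]
    exact h

/-- The sequence determined by `c_L = c_{L-1} + p^{L-1} c_{L-2}` for `L ≥ 2`,
with initial values `c_0 = c0`, `c_1 = c1`. -/
noncomputable def rr (p c0 c1 : RatFunc ℚ) : ℕ → RatFunc ℚ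
  | 0 => c0
  | 1 => c1
  | n + 2 => rr p c0 c1 (n + 1) + p ^ (n + 1) * rr p c0 c1 n

/-- `e_L(q) := rr q 1 1 L` satisfies `Σ_{t≥0} q^{t²} qbinom(L-t, t) = e_L(q)` for all `L ≥ 0`.
(The sum is finite: the terms vanish for `2t > L`.) -/
theorem stmt1 (L : ℕ) :
    ∑ t ∈ Finset.range (L + 1), q ^ (t ^ 2) * qbin q ((L : ℤ) - t) t = rr q 1 1 L := by
  induction L using Nat.strong_induction_on with
  | _ L ih =>
    match L with
    | 0 =>
      have h0 := qbin_zero 0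
      simp only [Nat.cast_zero] at h0
      simp [rr, h0]
    | 1 =>
      have h0 := qbin_zero 1
      have h1 : qbin q 0 1 = 0 := qbin_gt _ _ (by omega)
      simp only [Nat.cast_one] at h0
      simp [rr, Finset.sum_range_succ, h0, h1]
    | (n + 2) =>
      have ih1 := ih (n + 1) (by omega)
      have ih0 := ih n (by omega)
      rw [Finset.sum_range_succ]
      have hlast : q ^ ((n + 2) ^ 2) * qbin q (((n + 2 : ℕ) : ℤ) - ((n + 2 : ℕ) : ℤ)) ((n + 2 : ℕ) : ℤ) = 0 := by
        rw [qbin_gt _ _ (by push_cast; omega), mul_zero]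
      rw [hlast, add_zero]
      have step : ∀ t ∈ Finset.range (n + 2),
          q ^ (t ^ 2) * qbin q (((n + 2 : ℕ) : ℤ) - (t : ℤ)) (t : ℤ)
          = q ^ (t ^ 2) * qbin q (((n + 1 : ℕ) : ℤ) - (t : ℤ)) (t : ℤ)
            + q ^ (((t : ℤ)) ^ 2 + ((n : ℤ) + 2) - 2 * (t : ℤ)) *
              qbin q (((n + 1 : ℕ) : ℤ) - (t : ℤ)) ((t : ℤ) - 1) := by
        intro t ht
        simp only [Finset.mem_range] at ht
        rw [pascal (((n + 2 : ℕ) : ℤ) - (t : ℤ)) (t : ℤ) (by push_cast; omega)]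
        rw [show ((n + 2 : ℕ) : ℤ) - (t : ℤ) - 1 = ((n + 1 : ℕ) : ℤ) - (t : ℤ) by push_cast; ring]
        rw [mul_add]
        congr 1
        rw [← mul_assoc, ← zpow_natCast q (t ^ 2), ← zpow_add₀ q_ne]
        congr 2
        push_cast; ring
      rw [Finset.sum_congr rfl step, Finset.sum_add_distrib, ih1]
      congr 1
      rw [Finset.sum_range_succ']
      have h0 : q ^ (((0 : ℕ) : ℤ) ^ 2 + ((n : ℤ) + 2) - 2 * ((0 : ℕ) : ℤ)) *
          qbin q (((n + 1 : ℕ) : ℤ) - ((0 : ℕ) : ℤ)) (((0 : ℕ) : ℤ) - 1) = 0 := by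
        rw [qbin_neg _ _ (by omega), mul_zero]
      rw [h0, add_zero]
      have step2 : ∀ s ∈ Finset.range (n + 1),
          q ^ (((s + 1 : ℕ) : ℤ) ^ 2 + ((n : ℤ) + 2) - 2 * ((s + 1 : ℕ) : ℤ)) *
            qbin q (((n + 1 : ℕ) : ℤ) - ((s + 1 : ℕ) : ℤ)) (((s + 1 : ℕ) : ℤ) - 1)
          = q ^ (n + 1) * (q ^ (s ^ 2) * qbin q ((n : ℤ) - (s : ℤ)) (s : ℤ)) := by
        intro s _
        rw [show ((n + 1 : ℕ) : ℤ) - ((s + 1 : ℕ) : ℤ) = ((n : ℤ) - (s : ℤ)) by push_cast; ring]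
        rw [show ((s + 1 : ℕ) : ℤ) - 1 = ((s : ℕ) : ℤ) by push_cast; ring]
        rw [show ((s + 1 : ℕ) : ℤ) ^ 2 + ((n : ℤ) + 2) - 2 * ((s + 1 : ℕ) : ℤ)
            = (((n + 1) + s ^ 2 : ℕ) : ℤ) by push_cast; ring]
        rw [zpow_natCast, pow_add, mul_assoc]
      rw [Finset.sum_congr rfl step2, ← Finset.mul_sum, ih0]
end

section
/- For L ≥ 1, e_{-L}(q) defined via the backward recurrence equals (-1)^L q^{binom(L,2)} d_{L-1}(1/q), and d_{-L}(q) equals (-1)^{L+1} q^{binom(L,2)} e_{L-1}(1/q). -/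
theorem rr_neg (p c0 c1 : RatFunc ℚ) (n : ℕ) : rr p (-c0) (-c1) n = -rr p c0 c1 n := by
  induction n using Nat.twoStepInduction with
  | zero => rfl
  | one => rfl
  | more n ih₀ ih₁ => simp only [rr, ih₀, ih₁]; ring

theorem eq_rr_of_recurrence {p : RatFunc ℚ} {f : ℕ → RatFunc ℚ}
    (hf : ∀ n, f (n + 2) = f (n + 1) + p ^ (n + 1) * f n) (n : ℕ) :
    f n = rr p (f 0) (f 1) n := by
  induction n using Nat.twoStepInduction with
  | zero => rfl
  | one => rfl
  | more n ih₀ ih₁ => rw [hf, ih₀, ih₁, rr]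

theorem choose_two_add_two (m : ℕ) : (m + 2).choose 2 = (m + 1).choose 2 + (m + 1) := by
  rw [Nat.choose_succ_succ', Nat.choose_one_right, add_comm]

section Recurrence

variable {p : RatFunc ℚ} {c : ℤ → RatFunc ℚ}
  (hc : ∀ L : ℤ, c L = c (L - 1) + p ^ (L - 1) * c (L - 2))
include hc

theorem recurrence_apply_neg_one : c (-1) = c 1 - c 0 := by
  have h := hc 1
  norm_num at h
  linear_combination -h

theorem recurrence_apply_neg_two (hp : p ≠ 0) : c (-2) = p * (c 0 - c (-1)) := by
  have h := hc 0
  norm_num at h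
  field_simp at h
  linear_combination -h

theorem recurrence_apply_neg_add_three (hp : p ≠ 0) (m : ℕ) :
    c (-((m : ℤ) + 3)) = p ^ (m + 2) * (c (-((m : ℤ) + 1)) - c (-((m : ℤ) + 2))) := by
  have h := hc (-((m : ℤ) + 1))
  rw [show -((m : ℤ) + 1) - 1 = -((m + 2 : ℕ) : ℤ) by push_cast; ring,
    show -((m : ℤ) + 1) - 2 = -((m : ℤ) + 3) by ring, zpow_neg, zpow_natCast] at h
  push_cast at h
  rw [h]
  field_simp
  ring

theorem recurrence_apply_neg_eq_rr_inv (hp : p ≠ 0) (n : ℕ) :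
    c (-((n : ℤ) + 1)) =
      (-1) ^ (n + 1) * p ^ ((n + 1).choose 2) * rr p⁻¹ (-c (-1)) (p⁻¹ * c (-2)) n := by
  set f : ℕ → RatFunc ℚ :=
    fun m ↦ (-1) ^ (m + 1) * (p ^ ((m + 1).choose 2))⁻¹ * c (-((m : ℤ) + 1))
  have hf : ∀ m, f (m + 2) = f (m + 1) + p⁻¹ ^ (m + 1) * f m := by
    intro m
    simp only [f]
    push_cast
    rw [show (m : ℤ) + 2 + 1 = m + 3 by ring, show (m : ℤ) + 1 + 1 = m + 2 by ring,
      recurrence_apply_neg_add_three hc hp, choose_two_add_two (m + 1), choose_two_add_two m,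
      inv_pow]
    field_simp
    ring
  have hf₀ : f 0 = -c (-1) := by simp [f]
  have hf₁ : f 1 = p⁻¹ * c (-2) := by norm_num [f]
  rw [← hf₀, ← hf₁, ← eq_rr_of_recurrence hf]
  simp only [f]
  field_simp
  rw [← pow_mul, mul_comm (n + 1), pow_mul, neg_one_sq, one_pow, mul_one]

end Recurrence

/-- If `ce, cd : ℤ → RatFunc ℚ` satisfy the recurrence `c_L = c_{L-1} + q^{L-1} c_{L-2}`
for all integers `L` (read forward and backward), with `ce 0 = ce 1 = cd 1 = 1`, `cd 0 = 0`
(so `ce` extends `e` and `cd` extends `d` to negative indices), then for `L ≥ 1`: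
`e_{-L}(q) = (-1)^L q^{binom(L,2)} d_{L-1}(1/q)` and
`d_{-L}(q) = (-1)^{L+1} q^{binom(L,2)} e_{L-1}(1/q)`. -/
theorem stmt11 (ce cd : ℤ → RatFunc ℚ)
    (hce : ∀ L : ℤ, ce L = ce (L - 1) + q ^ (L - 1) * ce (L - 2))
    (hcd : ∀ L : ℤ, cd L = cd (L - 1) + q ^ (L - 1) * cd (L - 2))
    (hce0 : ce 0 = 1) (hce1 : ce 1 = 1) (hcd0 : cd 0 = 0) (hcd1 : cd 1 = 1)
    (L : ℕ) (hL : 1 ≤ L) :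
    ce (-(L : ℤ)) = (-1) ^ L * q ^ (L.choose 2) * rr q⁻¹ 0 1 (L - 1) ∧
    cd (-(L : ℤ)) = (-1) ^ (L + 1) * q ^ (L.choose 2) * rr q⁻¹ 1 1 (L - 1) := by
  have hq : q ≠ 0 := RatFunc.X_ne_zero
  have hce_neg_one : ce (-1) = 0 := by rw [recurrence_apply_neg_one hce, hce0, hce1, sub_self]
  have hcd_neg_one : cd (-1) = 1 := by rw [recurrence_apply_neg_one hcd, hcd0, hcd1, sub_zero]
  have hce_neg_two : ce (-2) = q := by
    rw [recurrence_apply_neg_two hce hq, hce0, hce_neg_one, sub_zero, mul_one]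
  have hcd_neg_two : cd (-2) = -q := by
    rw [recurrence_apply_neg_two hcd hq, hcd0, hcd_neg_one, zero_sub, mul_neg_one]
  obtain ⟨n, rfl⟩ : ∃ n, L = n + 1 := ⟨L - 1, by omega⟩
  push_cast
  rw [recurrence_apply_neg_eq_rr_inv hce hq, recurrence_apply_neg_eq_rr_inv hcd hq,
    hce_neg_one, hce_neg_two, hcd_neg_one, hcd_neg_two, inv_mul_cancel₀ hq, mul_neg,
    inv_mul_cancel₀ hq, neg_zero, rr_neg]
  constructor <;> ring
end
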